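/- arXiv:2004.01034 — 10 statements merged into one kernel-verified Lean document; each statement's English description precedes it below -/
import Mathlib

section
/- If y_0 ∈ (0,1), x_0 = 0, a_1 = 1/(1-y_0), b_1 = 1/(1+y_0), and for i ≥ 1 the sequences satisfy x_i = x_{i-1} + 2 - (a_i - b_i)y_{i-1}/(-4i+3+a_i+b_i), y_i = y_{i-1} - 2y_{i-1}/(-4i+3+a_i+b_i), a_{i+1} = a_i + 2/(1-y_i), b_{i+1} = b_i + 2/(1+y_i), then for every i ≥ 1 one has 4i-3 = ((x_{i-1}+a_i)(1-y_{i-1}) + (x_{i-1}+b_i)(1+y_{i-1}))/2, provided all denominators are nonzero. -/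
/-- the area identity for the recursively defined strip tiling coordinates. -/
theorem stmt_0 (x y a b : ℕ → ℝ)
    (hy0 : y 0 ∈ Set.Ioo (0:ℝ) 1) (hx0 : x 0 = 0)
    (ha1 : a 1 = 1 / (1 - y 0)) (hb1 : b 1 = 1 / (1 + y 0))
    (hden1 : ∀ i : ℕ, 1 - y i ≠ 0)
    (hden2 : ∀ i : ℕ, 1 + y i ≠ 0)
    (hden3 : ∀ i : ℕ, (-4 * ((i:ℝ) + 1) + 3 + a (i+1) + b (i+1)) ≠ 0)
    (hx : ∀ i : ℕ, x (i+1) = x i + 2 -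
      (a (i+1) - b (i+1)) * y i / (-4 * ((i:ℝ) + 1) + 3 + a (i+1) + b (i+1)))
    (hy : ∀ i : ℕ, y (i+1) = y i -
      2 * y i / (-4 * ((i:ℝ) + 1) + 3 + a (i+1) + b (i+1)))
    (ha : ∀ i : ℕ, a (i+2) = a (i+1) + 2 / (1 - y (i+1)))
    (hb : ∀ i : ℕ, b (i+2) = b (i+1) + 2 / (1 + y (i+1))) :
    ∀ i : ℕ, 4 * ((i:ℝ) + 1) - 3 =
      ((x i + a (i+1)) * (1 - y i) + (x i + b (i+1)) * (1 + y i)) / 2 := by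
  intro i
  induction i with
  | zero =>
    rw [hx0, ha1, hb1]
    have h1 := hden1 0
    have h2 := hden2 0
    field_simp
    ring
  | succ n ih =>
    have hd := hden3 n
    have h1 := hden1 (n+1)
    have h2 := hden2 (n+1)
    have key1 : (x (n+1) + a (n+2)) * (1 - y (n+1)) + (x (n+1) + b (n+2)) * (1 + y (n+1))
        = (x (n+1) + a (n+1)) * (1 - y (n+1)) + (x (n+1) + b (n+1)) * (1 + y (n+1)) + 4 := by
      rw [ha n, hb n]
      field_simp
      ring
    have key2 : (x (n+1) + a (n+1)) * (1 - y (n+1)) + (x (n+1) + b (n+1)) * (1 + y (n+1))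
        = (x n + a (n+1)) * (1 - y n) + (x n + b (n+1)) * (1 + y n) + 4 := by
      rw [hx n, hy n]
      field_simp
      ring
    push_cast
    rw [key1, key2]
    push_cast at ih
    linarith [ih]
end

section
/- Let y_0 ∈ (0,1) and define h_0 = 1 + 2y_0²/(1-y_0²), and recursively y_{i+1} = (1 - 2/h_i) y_i and h_{i+1} = h_i + 4 y_{i+1}²/(1 - y_{i+1}²). Then there exists δ > 0 such that for all 0 < y_0 < δ and all i ≥ 0: h_i < 1 + 5(y_0² + y_1² + ... + y_i²) < 2. -/
/-!
Write `S i = y 0 ^ 2 + ⋯ + y i ^ 2`. As long as `1 + 2 S ≤ h < 1 + 5 S` and `S ≤ 1/5`, the factor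
`1 - 2/h` has absolute value at most `(1 - 2 S)/(1 + 2 S)`, and this makes the quantity
`y i ^ 2 + 2 (S i) ^ 2` nonincreasing. Hence `2 (S i) ^ 2 ≤ y 0 ^ 2 + 2 y 0 ^ 4`, so `S i ≤ y 0 < 1/5`,
which keeps the induction going and gives `1 + 5 S i < 2`; the bounds on `h (i + 1)` follow from
`t ≤ t / (1 - t) ≤ 5t/4` for `0 ≤ t ≤ 1/5`.
-/

open Finset

lemma sq_one_sub_two_div_mul_le {S h : ℝ} (hS : 0 ≤ S) (hS' : S ≤ 1 / 2)
    (hlo : 1 + 2 * S ≤ h) (hhi : h ≤ 2) :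
    (1 - 2 / h) ^ 2 * (1 + 2 * S) ^ 2 ≤ (1 - 2 * S) ^ 2 := by
  have hpos : 0 < h := by linarith
  have hq : (1 - 2 / h) * (1 + 2 * S) = (h - 2) * (1 + 2 * S) / h := by field_simp
  rw [← mul_pow, hq]
  apply sq_le_sq'
  · rw [le_div_iff₀ hpos]; nlinarith
  · rw [div_le_iff₀ hpos]; nlinarith

lemma le_one_of_mul_sq_le {r S : ℝ} (hS : 0 ≤ S) (hrS : r * (1 + 2 * S) ^ 2 ≤ (1 - 2 * S) ^ 2) :
    r ≤ 1 :=
  le_of_mul_le_mul_right (a := (1 + 2 * S) ^ 2) (by nlinarith) (by positivity)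

lemma mul_add_two_mul_sq_le {r a S : ℝ} (hr : 0 ≤ r) (ha : 0 ≤ a) (haS : a ≤ S) (hS : S ≤ 1 / 2)
    (hrS : r * (1 + 2 * S) ^ 2 ≤ (1 - 2 * S) ^ 2) :
    r * a + 2 * (S + r * a) ^ 2 ≤ a + 2 * S ^ 2 := by
  have hS0 : 0 ≤ S := ha.trans haS
  have hra : r * a ≤ a := mul_le_of_le_one_left ha (le_one_of_mul_sq_le hS0 hrS)
  have hrS' := mul_le_mul_of_nonneg_right hrS ha
  have hra2 : r * a * (r * a) ≤ a * S := mul_le_mul hra (hra.trans haS) (by positivity) ha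
  nlinarith [mul_nonneg (mul_nonneg ha hS0) (by linarith : 0 ≤ 1 - 2 * S),
    mul_nonneg (mul_nonneg hr ha) (sq_nonneg S)]

lemma le_div_one_sub {t : ℝ} (ht : 0 ≤ t) (ht' : t < 1) : t ≤ t / (1 - t) := by
  rw [le_div_iff₀ (by linarith)]; nlinarith

lemma div_one_sub_le {t : ℝ} (ht : 0 ≤ t) (ht' : t ≤ 1 / 5) : t / (1 - t) ≤ 5 / 4 * t := by
  rw [div_le_iff₀ (by linarith)]; nlinarith

lemma step_bounds {a a' S h : ℝ} (ha : 0 ≤ a) (haS : a ≤ S) (hS : S ≤ 1 / 5)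
    (hlo : 1 + 2 * S ≤ h) (hhi : h < 1 + 5 * S) (ha' : a' = (1 - 2 / h) ^ 2 * a) :
    a' + 2 * (S + a') ^ 2 ≤ a + 2 * S ^ 2 ∧
      1 + 2 * (S + a') ≤ h + 4 * a' / (1 - a') ∧ h + 4 * a' / (1 - a') < 1 + 5 * (S + a') := by
  have hS0 : 0 ≤ S := ha.trans haS
  have hr := sq_one_sub_two_div_mul_le hS0 (by linarith) hlo (by linarith)
  have ha'0 : 0 ≤ a' := ha' ▸ by positivity
  have ha'a : a' ≤ a := ha' ▸ mul_le_of_le_one_left ha (le_one_of_mul_sq_le hS0 hr)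
  have hlow := le_div_one_sub ha'0 (by linarith)
  have hupp := div_one_sub_le ha'0 (by linarith)
  rw [mul_div_assoc]
  exact ⟨ha' ▸ mul_add_two_mul_sq_le (sq_nonneg _) ha haS (by linarith) hr,
    by linarith, by linarith⟩

lemma le_of_two_mul_sq_le {s c : ℝ} (hs : 0 ≤ s) (hc : 0 ≤ c) (hc' : c ^ 2 ≤ 1 / 2)
    (h : 2 * s ^ 2 ≤ c ^ 2 + 2 * c ^ 4) : s ≤ c :=
  (pow_le_pow_iff_left₀ hs hc two_ne_zero).mp (by nlinarith)

def sumSq (y : ℕ → ℝ) (i : ℕ) : ℝ := ∑ j ∈ range (i + 1), y j ^ 2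

lemma sumSq_nonneg (y : ℕ → ℝ) (i : ℕ) : 0 ≤ sumSq y i :=
  sum_nonneg fun _ _ ↦ sq_nonneg _

lemma sq_le_sumSq (y : ℕ → ℝ) (i : ℕ) : y i ^ 2 ≤ sumSq y i :=
  single_le_sum (f := fun j ↦ y j ^ 2) (fun _ _ ↦ sq_nonneg _) (self_mem_range_succ i)

lemma sumSq_succ (y : ℕ → ℝ) (i : ℕ) : sumSq y (i + 1) = sumSq y i + y (i + 1) ^ 2 :=
  sum_range_succ _ _

lemma sumSq_le {y : ℕ → ℝ} {c : ℝ} {i : ℕ} (hc0 : 0 ≤ c) (hc : c ≤ 1 / 5)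
    (hV : y i ^ 2 + 2 * sumSq y i ^ 2 ≤ c ^ 2 + 2 * c ^ 4) : sumSq y i ≤ c :=
  le_of_two_mul_sq_le (sumSq_nonneg y i) hc0 (by nlinarith) (by nlinarith [sq_nonneg (y i)])

lemma sumSq_invariant {y h : ℕ → ℝ} {c : ℝ} (hc0 : 0 < c) (hc : c ≤ 1 / 5) (hy0 : y 0 = c)
    (hh0 : h 0 = 1 + 2 * c ^ 2 / (1 - c ^ 2))
    (hy : ∀ i, y (i + 1) = (1 - 2 / h i) * y i)
    (hh : ∀ i, h (i + 1) = h i + 4 * y (i + 1) ^ 2 / (1 - y (i + 1) ^ 2)) (i : ℕ) :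
    y i ^ 2 + 2 * sumSq y i ^ 2 ≤ c ^ 2 + 2 * c ^ 4 ∧
      1 + 2 * sumSq y i ≤ h i ∧ h i < 1 + 5 * sumSq y i := by
  induction i with
  | zero =>
    have hS : sumSq y 0 = c ^ 2 := by simp [sumSq, hy0]
    have hc2 : c ^ 2 ≤ 1 / 5 := by nlinarith
    have hlow := le_div_one_sub (sq_nonneg c) (by linarith)
    have hupp := div_one_sub_le (sq_nonneg c) hc2
    rw [hS, hy0, hh0, mul_div_assoc]
    exact ⟨by ring_nf; rfl, by linarith, by nlinarith [pow_pos hc0 2]⟩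
  | succ i ih =>
    obtain ⟨hV, hlo, hhi⟩ := ih
    have hSc := sumSq_le hc0.le hc hV
    obtain ⟨hV', hlo', hhi'⟩ := step_bounds (a' := y (i + 1) ^ 2) (sq_nonneg (y i))
      (sq_le_sumSq y i) (by linarith) hlo hhi (by rw [hy i, mul_pow])
    rw [sumSq_succ, hh i]
    exact ⟨hV'.trans hV, hlo', hhi'⟩

/-- uniform bound h_i < 1 + 5(y_0²+...+y_i²) < 2 for small y_0. -/
theorem stmt_1 :
    ∃ δ > (0:ℝ), ∀ y h : ℕ → ℝ,
      y 0 ∈ Set.Ioo (0:ℝ) 1 → y 0 < δ →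
      h 0 = 1 + 2 * (y 0)^2 / (1 - (y 0)^2) →
      (∀ i : ℕ, y (i+1) = (1 - 2 / h i) * y i) →
      (∀ i : ℕ, h (i+1) = h i + 4 * (y (i+1))^2 / (1 - (y (i+1))^2)) →
      ∀ i : ℕ,
        h i < 1 + 5 * ∑ j ∈ Finset.range (i+1), (y j)^2 ∧
        1 + 5 * ∑ j ∈ Finset.range (i+1), (y j)^2 < 2 := by
  refine ⟨1 / 5, by norm_num, fun y h hy0 hδ hh0 hy hh i ↦ ?_⟩
  obtain ⟨hV, -, hhi⟩ := sumSq_invariant hy0.1 hδ.le rfl hh0 hy hh i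
  have hSc := sumSq_le hy0.1.le hδ.le hV
  exact ⟨hhi, show 1 + 5 * sumSq y i < 2 by linarith⟩
end

section
/- Let y_0 ∈ (0,1) and define h_0 = 1 + 2y_0²/(1-y_0²), y_{i+1} = (1 - 2/h_i) y_i, h_{i+1} = h_i + 4 y_{i+1}²/(1-y_{i+1}²). Then there exists δ > 0 such that for all 0 < y_0 < δ the sequence (h_i) is strictly increasing with 1 < h_i < 2 for all i. -/
/-!
With `r = 2 / h₀ - 1`, as long as `h₀ ≤ hᵢ < 2` the multiplier `1 - 2 / hᵢ` has modulus at most `r < 1`,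
so `yᵢ²` decays at least geometrically and `hᵢ` increases. The quantity `hᵢ + B yᵢ²` with
`B = h₀² / (2 y₀²)` is non-increasing, because `B (1 - r²) = 4 / (1 - y₀²)`, so the decay of
`B yᵢ²` pays for the increment `4 yᵢ₊₁² / (1 - yᵢ₊₁²) ≤ 4 yᵢ₊₁² / (1 - y₀²)` of `h`.
Hence `hᵢ ≤ h₀ + h₀² / 2`, which is `< 2` once `y₀` is small.
-/

lemma one_lt_one_add_two_mul_sq_div {a : ℝ} (ha : a ≠ 0) (ha1 : a ^ 2 < 1) :
    1 < 1 + 2 * a ^ 2 / (1 - a ^ 2) :=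
  lt_add_of_pos_right 1 (div_pos (by positivity) (by linarith))

lemma sq_two_div_sub_one_le_one {h₀ : ℝ} (h₀_ge : 1 ≤ h₀) : (2 / h₀ - 1) ^ 2 ≤ 1 := by
  rw [sq_le_one_iff_abs_le_one, abs_le]
  constructor
  · linarith [div_pos two_pos (zero_lt_one.trans_le h₀_ge)]
  · rw [sub_le_iff_le_add, div_le_iff₀ (by linarith)]; linarith

lemma one_sub_two_div_sq_le {h₀ h : ℝ} (h₀_pos : 0 < h₀) (hle : h₀ ≤ h) (hlt : h ≤ 2) :
    (1 - 2 / h) ^ 2 ≤ (2 / h₀ - 1) ^ 2 := by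
  have hpos : 0 < h := h₀_pos.trans_le hle
  have h_div_le : 2 / h ≤ 2 / h₀ := div_le_div_of_nonneg_left zero_le_two h₀_pos hle
  have one_le_div : 1 ≤ 2 / h := by rw [le_div_iff₀ hpos]; linarith
  exact sq_le_sq' (by linarith) (by linarith)

lemma four_mul_div_one_sub_le {u a : ℝ} (hu : 0 ≤ u) (hua : u ≤ a) (ha : a < 1) :
    4 * u / (1 - u) ≤ 4 / (1 - a) * u := by
  rw [div_mul_eq_mul_div, mul_comm _ u]
  exact div_le_div_of_nonneg_left (by positivity) (by linarith) (by linarith)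

lemma add_mul_sq_le_of_contraction {h h' y y' r c B : ℝ} (hcB : 0 ≤ c + B)
    (hB : (c + B) * r ^ 2 ≤ B) (hy : y' ^ 2 ≤ r ^ 2 * y ^ 2) (hh : h' ≤ h + c * y' ^ 2) :
    h' + B * y' ^ 2 ≤ h + B * y ^ 2 := by
  nlinarith [mul_le_mul_of_nonneg_left hy hcB, mul_le_mul_of_nonneg_right hB (sq_nonneg y)]

lemma lyapunov_weight_mul_one_sub_sq {a h₀ : ℝ} (ha : a ≠ 0) (ha1 : a ^ 2 < 1)
    (hh₀ : h₀ = 1 + 2 * a ^ 2 / (1 - a ^ 2)) :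
    h₀ ^ 2 / (2 * a ^ 2) * (1 - (2 / h₀ - 1) ^ 2) = 4 / (1 - a ^ 2) := by
  have h1a : 1 - a ^ 2 ≠ 0 := by linarith
  have hh₀' : h₀ = (1 + a ^ 2) / (1 - a ^ 2) := by rw [hh₀]; field_simp; ring
  have h1a' : 1 + a ^ 2 ≠ 0 := by positivity
  subst hh₀'
  field_simp
  ring

lemma lyapunov_weight_balance {a h₀ : ℝ} (ha : a ≠ 0) (ha1 : a ^ 2 < 1)
    (hh₀ : h₀ = 1 + 2 * a ^ 2 / (1 - a ^ 2)) :
    (4 / (1 - a ^ 2) + h₀ ^ 2 / (2 * a ^ 2)) * (2 / h₀ - 1) ^ 2 ≤ h₀ ^ 2 / (2 * a ^ 2) := by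
  have hc : 0 ≤ 4 / (1 - a ^ 2) := div_nonneg (by norm_num) (by linarith)
  have hbal := lyapunov_weight_mul_one_sub_sq ha ha1 hh₀
  have hr := sq_two_div_sub_one_le_one (hh₀ ▸ one_lt_one_add_two_mul_sq_div ha ha1).le
  nlinarith [mul_le_mul_of_nonneg_left hr hc]

section Recursion

variable {y h : ℕ → ℝ}

theorem le_and_sq_le_and_lyapunov_le (hy : ∀ i, y (i + 1) = (1 - 2 / h i) * y i)
    (hh : ∀ i, h (i + 1) = h i + 4 * y (i + 1) ^ 2 / (1 - y (i + 1) ^ 2))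
    (h₀ : 1 < h 0) (hy₀ : y 0 ^ 2 < 1) {B : ℝ} (hB₀ : 0 ≤ B)
    (hB : (4 / (1 - y 0 ^ 2) + B) * (2 / h 0 - 1) ^ 2 ≤ B) (hV : h 0 + B * y 0 ^ 2 < 2) (n : ℕ) :
    h 0 ≤ h n ∧ y n ^ 2 ≤ y 0 ^ 2 ∧ h n + B * y n ^ 2 ≤ h 0 + B * y 0 ^ 2 := by
  induction n with
  | zero => exact ⟨le_rfl, le_rfl, le_rfl⟩
  | succ n ih =>
    obtain ⟨h_ge, y_le, V_le⟩ := ih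
    have h_lt : h n < 2 := by nlinarith [sq_nonneg (y n)]
    have y_contr : y (n + 1) ^ 2 ≤ (2 / h 0 - 1) ^ 2 * y n ^ 2 := by
      rw [hy, mul_pow]
      exact mul_le_mul_of_nonneg_right
        (one_sub_two_div_sq_le (by linarith) h_ge h_lt.le) (sq_nonneg _)
    have y_le' : y (n + 1) ^ 2 ≤ y 0 ^ 2 := by
      nlinarith [sq_two_div_sub_one_le_one h₀.le, sq_nonneg (y n)]
    have incr_nonneg : 0 ≤ 4 * y (n + 1) ^ 2 / (1 - y (n + 1) ^ 2) :=
      div_nonneg (by positivity) (by linarith)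
    have incr_le := four_mul_div_one_sub_le (sq_nonneg (y (n + 1))) y_le' hy₀
    refine ⟨by rw [hh]; linarith, y_le', V_le.trans' ?_⟩
    exact add_mul_sq_le_of_contraction (by positivity) hB y_contr (by rw [hh]; linarith)

theorem strictMono_and_bounds_of_lyapunov (hy : ∀ i, y (i + 1) = (1 - 2 / h i) * y i)
    (hh : ∀ i, h (i + 1) = h i + 4 * y (i + 1) ^ 2 / (1 - y (i + 1) ^ 2))
    (h₀ : 1 < h 0) (hy₀ : y 0 ≠ 0) (hy₀1 : y 0 ^ 2 < 1) {B : ℝ} (hB₀ : 0 ≤ B)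
    (hB : (4 / (1 - y 0 ^ 2) + B) * (2 / h 0 - 1) ^ 2 ≤ B) (hV : h 0 + B * y 0 ^ 2 < 2) :
    StrictMono h ∧ ∀ i, 1 < h i ∧ h i < 2 := by
  have inv := le_and_sq_le_and_lyapunov_le hy hh h₀ hy₀1 hB₀ hB hV
  have bounds (n : ℕ) : 1 < h n ∧ h n < 2 := by
    obtain ⟨h_ge, -, V_le⟩ := inv n
    exact ⟨h₀.trans_le h_ge, by nlinarith [sq_nonneg (y n)]⟩
  have y_ne (n : ℕ) : y n ≠ 0 := by
    induction n with
    | zero => exact hy₀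
    | succ n ih =>
      obtain ⟨h_gt, h_lt⟩ := bounds n
      have : 1 < 2 / h n := by rw [lt_div_iff₀ (by linarith)]; linarith
      rw [hy]
      exact mul_ne_zero (by linarith) ih
  refine ⟨strictMono_nat_of_lt_succ fun n ↦ ?_, bounds⟩
  have y_sq_pos : 0 < y (n + 1) ^ 2 := by positivity [y_ne (n + 1)]
  have y_sq_lt : y (n + 1) ^ 2 < 1 := (inv (n + 1)).2.1.trans_lt hy₀1
  rw [hh, lt_add_iff_pos_right]
  exact div_pos (by positivity) (by linarith)

theorem strictMono_and_bounds (hy : ∀ i, y (i + 1) = (1 - 2 / h i) * y i)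
    (hh : ∀ i, h (i + 1) = h i + 4 * y (i + 1) ^ 2 / (1 - y (i + 1) ^ 2))
    (hy₀ : y 0 ≠ 0) (hy₀1 : y 0 ^ 2 < 1) (hh₀ : h 0 = 1 + 2 * y 0 ^ 2 / (1 - y 0 ^ 2))
    (hsmall : h 0 + h 0 ^ 2 / 2 < 2) :
    StrictMono h ∧ ∀ i, 1 < h i ∧ h i < 2 := by
  have h₀ : 1 < h 0 := hh₀ ▸ one_lt_one_add_two_mul_sq_div hy₀ hy₀1
  refine strictMono_and_bounds_of_lyapunov hy hh h₀ hy₀ hy₀1 (by positivity)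
    (lyapunov_weight_balance hy₀ hy₀1 hh₀) ?_
  rwa [← div_div, div_mul_cancel₀ _ (by positivity)]

end Recursion

/-- for small y_0 the sequence (h_i) is strictly increasing with 1 < h_i < 2. -/
theorem stmt_2 :
    ∃ δ > (0:ℝ), ∀ y h : ℕ → ℝ,
      y 0 ∈ Set.Ioo (0:ℝ) 1 → y 0 < δ →
      h 0 = 1 + 2 * (y 0)^2 / (1 - (y 0)^2) →
      (∀ i : ℕ, y (i+1) = (1 - 2 / h i) * y i) →
      (∀ i : ℕ, h (i+1) = h i + 4 * (y (i+1))^2 / (1 - (y (i+1))^2)) →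
      StrictMono h ∧ ∀ i : ℕ, 1 < h i ∧ h i < 2 := by
  refine ⟨1 / 4, by norm_num, fun y h ⟨hy₀, hy₀1⟩ hδ hh₀ hy hh ↦ ?_⟩
  have hsq : y 0 ^ 2 < 1 / 16 := by nlinarith
  have hh₀_lt : h 0 < 17 / 15 := by
    rw [hh₀, ← lt_sub_iff_add_lt', div_lt_iff₀ (by linarith)]; linarith
  have hh₀_gt : 1 < h 0 := hh₀ ▸ one_lt_one_add_two_mul_sq_div hy₀.ne' (by linarith)
  exact strictMono_and_bounds hy hh hy₀.ne' (by linarith) hh₀ (by nlinarith)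
end

section
/- Let y_0 ∈ (0,1) and define h_0 = 1 + 2y_0²/(1-y_0²), y_{i+1} = (1 - 2/h_i) y_i, h_{i+1} = h_i + 4 y_{i+1}²/(1-y_{i+1}²). Then there exists δ > 0 such that for all 0 < y_0 < δ: the sequence (|y_i|) is strictly decreasing, y_i ≠ 0 for all i, and sign(y_i) = (-1)^i. -/
set_option maxHeartbeats 1000000 in
/-- for small y_0 the absolute values |y_i| are strictly decreasing,
y_i ≠ 0 and sign(y_i) = (-1)^i. -/
theorem stmt_3 :
    ∃ δ > (0:ℝ), ∀ y h : ℕ → ℝ,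
      y 0 ∈ Set.Ioo (0:ℝ) 1 → y 0 < δ →
      h 0 = 1 + 2 * (y 0)^2 / (1 - (y 0)^2) →
      (∀ i : ℕ, y (i+1) = (1 - 2 / h i) * y i) →
      (∀ i : ℕ, h (i+1) = h i + 4 * (y (i+1))^2 / (1 - (y (i+1))^2)) →
      (StrictAnti fun i : ℕ => |y i|) ∧
      (∀ i : ℕ, y i ≠ 0) ∧
      (∀ i : ℕ, Real.sign (y i) = (-1 : ℝ)^i) := by
  refine ⟨1/4, by norm_num, ?_⟩
  intro y h hy0 hyδ hh0 hyrec hhrec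
  obtain ⟨hy0pos, hy0lt1⟩ := hy0
  have hy0lt : y 0 < 1/4 := by linarith
  have hy0sq : (y 0)^2 < 1/16 := by nlinarith
  have hd0 : (0:ℝ) < 1 - (y 0)^2 := by nlinarith
  have hu0 : (y 0)^2 / (1 - (y 0)^2) ≤ 1/15 := by
    rw [div_le_iff₀ hd0]; nlinarith
  have hh0gt1 : 1 < h 0 := by
    rw [hh0]
    have : 0 < 2 * (y 0)^2 / (1 - (y 0)^2) := by positivity
    linarith
  -- invariant
  set Inv : ℕ → Prop := fun i =>
    0 < (-1:ℝ)^i * y i ∧ (y i)^2 ≤ (y 0)^2 ∧ h 0 ≤ h i ∧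
      h i ≤ 2 - (y i)^2 / (1 - (y i)^2) with hInv
  have step : ∀ i, Inv i → Inv (i+1) ∧ (y (i+1))^2 < (y i)^2 := by
    intro i ⟨hsgn, hsq, hge, hle⟩
    have hne : y i ≠ 0 := by
      intro h0; rw [h0, mul_zero] at hsgn; exact lt_irrefl 0 hsgn
    have ha2 : 0 < (y i)^2 := by
      have := pow_pos (abs_pos.mpr hne) 2; rwa [sq_abs] at this
    have hd1 : (0:ℝ) < 1 - (y i)^2 := by linarith
    have hu : (y i)^2 / (1 - (y i)^2) ≤ 1/15 := by
      rw [div_le_iff₀ hd1]; nlinarith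
    have hupos : 0 < (y i)^2 / (1 - (y i)^2) := div_pos ha2 hd1
    have hH1 : 1 < h i := lt_of_lt_of_le hh0gt1 hge
    have hH2 : h i < 2 := by linarith
    have hHpos : (0:ℝ) < h i := by linarith
    have hb : y (i+1) = (1 - 2 / h i) * y i := hyrec i
    have hHb : h i * y (i+1) = (h i - 2) * y i := by
      rw [hb]; field_simp
    have hbsq : (h i)^2 * (y (i+1))^2 = (2 - h i)^2 * (y i)^2 := by
      linear_combination (h i * y (i+1) + (h i - 2) * y i) * hHb
    have hblt : (y (i+1))^2 < (y i)^2 := by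
      nlinarith [hbsq, ha2, sq_nonneg (y (i+1)), mul_pos ha2 (by linarith : (0:ℝ) < h i - 1)]
    have hbne : y (i+1) ≠ 0 := by
      intro h0; rw [h0, mul_zero] at hHb
      exact mul_ne_zero (ne_of_lt (by linarith : h i - 2 < 0)) hne hHb.symm
    have hb2 : 0 < (y (i+1))^2 := by
      have := pow_pos (abs_pos.mpr hbne) 2; rwa [sq_abs] at this
    have hd2 : (0:ℝ) < 1 - (y (i+1))^2 := by linarith
    have hH' : h (i+1) = h i + 4 * (y (i+1))^2 / (1 - (y (i+1))^2) := hhrec i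
    have hvnn : 0 ≤ (y (i+1))^2 / (1 - (y (i+1))^2) := le_of_lt (div_pos hb2 hd2)
    constructor
    · refine ⟨?_, by linarith, ?_, ?_⟩
      · -- sign
        have hp : 1 - 2 / h i < 0 := by
          have : 1 < 2 / h i := (lt_div_iff₀ hHpos).mpr (by linarith)
          linarith
        have : (-1:ℝ)^(i+1) * y (i+1) = (-(1 - 2 / h i)) * ((-1)^i * y i) := by
          rw [hb, pow_succ]; ring
        rw [this]
        exact mul_pos (by linarith) hsgn
      · rw [hH', mul_div_assoc]; linarith
      · -- the key estimate
        rw [hH', mul_div_assoc]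
        have hUdef : (y i)^2 / (1 - (y i)^2) * (1 - (y i)^2) = (y i)^2 :=
          div_mul_cancel₀ _ (ne_of_gt hd1)
        have hVdef : (y (i+1))^2 / (1 - (y (i+1))^2) * (1 - (y (i+1))^2) = (y (i+1))^2 :=
          div_mul_cancel₀ _ (ne_of_gt hd2)
        set U := (y i)^2 / (1 - (y i)^2) with hU
        set V := (y (i+1))^2 / (1 - (y (i+1))^2) with hV
        -- V * (1 - a^2) ≤ b^2
        have hVd1 : V * (1 - (y i)^2) ≤ (y (i+1))^2 := by
          rw [← hVdef]; nlinarith [hvnn, hblt]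
        have h1 : (h i)^2 * (V * (1 - (y i)^2)) ≤ (2 - h i)^2 * (U * (1 - (y i)^2)) := by
          rw [hUdef]
          nlinarith [hVd1, sq_nonneg (h i)]
        have hstep2 : (h i)^2 * V ≤ (2 - h i)^2 * U := by
          nlinarith [h1, hd1]
        have hVle : V ≤ (2 - h i)^2 * U := by
          nlinarith [hstep2, mul_nonneg hvnn (by nlinarith : (0:ℝ) ≤ (h i)^2 - 1)]
        have hfin : 5 * V ≤ 2 - h i := by
          nlinarith [hVle, hu, le_of_lt hupos, mul_nonneg (le_of_lt hupos) (by linarith : (0:ℝ) ≤ 2 - h i),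
            mul_nonneg (mul_nonneg (le_of_lt hupos) (by linarith : (0:ℝ) ≤ 2 - h i)) (by linarith : (0:ℝ) ≤ 1 - (2 - h i))]
        linarith
    · exact hblt
  have key : ∀ i, Inv i := by
    intro i
    induction i with
    | zero =>
      refine ⟨by simpa using hy0pos, le_refl _, le_refl _, ?_⟩
      rw [hh0, mul_div_assoc]; linarith
    | succ i ih => exact (step i ih).1
  have dec : ∀ i, |y (i+1)| < |y i| := by
    intro i
    have h2 := (step i (key i)).2
    nlinarith [abs_nonneg (y i), abs_nonneg (y (i+1)), sq_abs (y i), sq_abs (y (i+1))]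
  refine ⟨strictAnti_nat_of_succ_lt dec, ?_, ?_⟩
  · intro i
    have := (key i).1
    intro h0; rw [h0, mul_zero] at this; exact lt_irrefl 0 this
  · intro i
    have hs := (key i).1
    rcases Nat.even_or_odd i with he|ho
    · rw [he.neg_one_pow] at hs ⊢
      rw [one_mul] at hs
      exact Real.sign_of_pos hs
    · rw [ho.neg_one_pow] at hs ⊢
      have : y i < 0 := by nlinarith
      rw [Real.sign_of_neg this]
end

section
/- Let y_0 ∈ (0,1) and define h_0 = 1 + 2y_0²/(1-y_0²), y_{i+1} = (1 - 2/h_i) y_i, h_{i+1} = h_i + 4 y_{i+1}²/(1-y_{i+1}²). Then there exists δ > 0 such that for all 0 < y_0 < δ the series Σ_{j=0}^∞ |y_j| converges and its sum is less than 4. -/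
/-! Write `t = y 0`. The potential `h n + (2 / t) |y n|` is nonincreasing, so `|y|` never
increases and `h` stays in `[h 0, 4]`. While `h n < 1 + 2t/5`, `|y|` shrinks by a factor of at
least `1 - 4t/5` per step, so `h` gains about `4t²` per step and crosses `1 + 2t/5` within
`M ≈ 1/(4t)` steps, which contribute at most `M t ≈ 1/4` to the sum. From then on `|y|` contracts
by the factor `1 - 2t/5`, and the remaining terms add up to at most `t / (2t/5) = 5/2`. -/

open Finset

lemma abs_one_sub_two_div_le {H c : ℝ} (hc0 : 0 ≤ c) (hc : c ≤ H - 1) (hc2 : c ≤ 1 / 2)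
    (hH : H ≤ 4) : |1 - 2 / H| ≤ 1 - c := by
  have hH0 : 0 < H := by linarith
  have hlow : 2 / H ≤ 2 - c := by
    rw [div_le_iff₀ hH0]
    rcases le_total H 2 with hH2 | hH2 <;> nlinarith [mul_le_mul_of_nonneg_left hc hH0.le]
  have hup : c ≤ 2 / H := by rw [le_div_iff₀ hH0]; nlinarith
  rw [abs_le]
  constructor <;> linarith

lemma le_abs_one_sub_two_div {H : ℝ} (hH : 0 < H) : 3 - 2 * H ≤ |1 - 2 / H| := by
  refine le_trans ?_ (neg_le_abs _)
  rw [neg_sub, le_sub_iff_add_le, le_div_iff₀ hH]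
  nlinarith [sq_nonneg (H - 1)]

lemma sum_range_le_div_of_le_one_sub_mul {a : ℕ → ℝ} {c : ℝ} (hc : 0 < c) (ha : ∀ n, 0 ≤ a n)
    (hstep : ∀ n, a (n + 1) ≤ (1 - c) * a n) (N : ℕ) : ∑ n ∈ range N, a n ≤ a 0 / c := by
  rw [le_div_iff₀ hc, sum_mul]
  calc ∑ n ∈ range N, a n * c ≤ ∑ n ∈ range N, (a n - a (n + 1)) :=
        sum_le_sum fun n _ => by linarith [hstep n]
    _ = a 0 - a N := sum_range_sub' a N
    _ ≤ a 0 := by linarith [ha N]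

/-- One step of the potential: the increment `4B²/(1 - B²)` of `h` is paid for by the decrease
`A - B` of `|y|`. -/
lemma four_sq_div_le {t A B : ℝ} (ht : 0 < t) (ht1 : t < 1) (hA : 0 ≤ A) (hAt : A ≤ t)
    (hB : 0 ≤ B) (hBA : B ≤ (1 - 2 * t ^ 2 / (1 - t ^ 2)) * A) :
    4 * B ^ 2 / (1 - B ^ 2) ≤ 2 / t * (A - B) := by
  have ht2 : 0 < 1 - t ^ 2 := by nlinarith
  set e := 2 * t ^ 2 / (1 - t ^ 2) with he
  have he0 : 0 ≤ e := by positivity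
  have hBA' : B ≤ A := by nlinarith
  have hB2 : B ^ 2 ≤ t * A := by nlinarith
  calc 4 * B ^ 2 / (1 - B ^ 2) ≤ 4 * (t * A) / (1 - t ^ 2) := by
        gcongr
        nlinarith
    _ = 2 / t * (e * A) := by rw [he]; field_simp; ring
    _ ≤ 2 / t * (A - B) := by gcongr; linarith

structure IsOrbit (y h : ℕ → ℝ) : Prop where
  h_zero : h 0 = 1 + 2 * y 0 ^ 2 / (1 - y 0 ^ 2)
  y_succ : ∀ i, y (i + 1) = (1 - 2 / h i) * y i
  h_succ : ∀ i, h (i + 1) = h i + 4 * y (i + 1) ^ 2 / (1 - y (i + 1) ^ 2)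

namespace IsOrbit

variable {y h : ℕ → ℝ}

lemma abs_y_succ (ho : IsOrbit y h) (n : ℕ) : |y (n + 1)| = |1 - 2 / h n| * |y n| := by
  rw [ho.y_succ, abs_mul]

lemma abs_le_and_h_bounds (ho : IsOrbit y h) (ht0 : 0 < y 0) (ht : y 0 ≤ 1 / 10) (n : ℕ) :
    |y n| ≤ y 0 ∧ h 0 ≤ h n ∧ h n + 2 / y 0 * |y n| ≤ h 0 + 2 := by
  set t := y 0
  set e := 2 * t ^ 2 / (1 - t ^ 2) with he
  have ht2 : 0 < 1 - t ^ 2 := by nlinarith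
  have he0 : 0 ≤ e := by positivity
  have he2 : e ≤ 1 / 2 := by rw [he, div_le_iff₀ ht2]; nlinarith
  have hh0 : h 0 = 1 + e := ho.h_zero
  induction n with
  | zero =>
    rw [abs_of_pos ht0, div_mul_cancel₀ _ ht0.ne']
    exact ⟨le_rfl, le_rfl, le_rfl⟩
  | succ n ih =>
    obtain ⟨hAt, hh0n, hpot⟩ := ih
    have hA : 0 ≤ 2 / t * |y n| := by positivity
    have hρ : |1 - 2 / h n| ≤ 1 - e := abs_one_sub_two_div_le he0 (by linarith) he2 (by linarith)
    have hBA : |y (n + 1)| ≤ (1 - e) * |y n| := by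
      rw [ho.abs_y_succ]; exact mul_le_mul_of_nonneg_right hρ (abs_nonneg _)
    have hstep := four_sq_div_le ht0 (by linarith) (abs_nonneg _) hAt (abs_nonneg _) hBA
    have hBt : |y (n + 1)| ≤ t := by nlinarith [abs_nonneg (y n)]
    have hinc : 0 ≤ 4 * |y (n + 1)| ^ 2 / (1 - |y (n + 1)| ^ 2) := by
      have : |y (n + 1)| ^ 2 < 1 := by nlinarith [abs_nonneg (y (n + 1))]
      exact div_nonneg (by positivity) (by linarith)
    rw [ho.h_succ, ← sq_abs (y (n + 1))]
    exact ⟨hBt, by linarith, by linarith⟩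


lemma abs_le (ho : IsOrbit y h) (ht0 : 0 < y 0) (ht : y 0 ≤ 1 / 10) (n : ℕ) : |y n| ≤ y 0 :=
  (ho.abs_le_and_h_bounds ht0 ht n).1

lemma one_le_h (ho : IsOrbit y h) (ht0 : 0 < y 0) (ht : y 0 ≤ 1 / 10) (n : ℕ) : 1 ≤ h n := by
  have : 0 ≤ 2 * y 0 ^ 2 / (1 - y 0 ^ 2) := div_nonneg (by positivity) (by nlinarith)
  linarith [ho.h_zero, (ho.abs_le_and_h_bounds ht0 ht n).2.1]

lemma h_le_four (ho : IsOrbit y h) (ht0 : 0 < y 0) (ht : y 0 ≤ 1 / 10) (n : ℕ) : h n ≤ 4 := by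
  obtain ⟨-, -, hpot⟩ := ho.abs_le_and_h_bounds ht0 ht n
  have : 2 * y 0 ^ 2 / (1 - y 0 ^ 2) ≤ 1 := by rw [div_le_iff₀ (by nlinarith)]; nlinarith
  have : 0 ≤ 2 / y 0 * |y n| := by positivity
  linarith [ho.h_zero]

lemma h_add_four_sq_le (ho : IsOrbit y h) (ht0 : 0 < y 0) (ht : y 0 ≤ 1 / 10) (n : ℕ) :
    h n + 4 * y (n + 1) ^ 2 ≤ h (n + 1) := by
  have hy : y (n + 1) ^ 2 ≤ y 0 ^ 2 := by
    rw [← sq_abs]; exact pow_le_pow_left₀ (abs_nonneg _) (ho.abs_le ht0 ht _) 2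
  have hden : 0 < 1 - y (n + 1) ^ 2 := by nlinarith
  have : 4 * y (n + 1) ^ 2 ≤ 4 * y (n + 1) ^ 2 / (1 - y (n + 1) ^ 2) := by
    rw [le_div_iff₀ hden]; nlinarith [sq_nonneg (y (n + 1))]
  linarith [ho.h_succ n]

lemma monotone_h (ho : IsOrbit y h) (ht0 : 0 < y 0) (ht : y 0 ≤ 1 / 10) : Monotone h :=
  monotone_nat_of_le_succ fun n => by nlinarith [ho.h_add_four_sq_le ht0 ht n]

lemma abs_y_succ_le (ho : IsOrbit y h) (ht0 : 0 < y 0) (ht : y 0 ≤ 1 / 10) {c : ℝ} {n : ℕ}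
    (hc0 : 0 ≤ c) (hc2 : c ≤ 1 / 2) (hcn : 1 + c ≤ h n) : |y (n + 1)| ≤ (1 - c) * |y n| := by
  rw [ho.abs_y_succ]
  exact mul_le_mul_of_nonneg_right
    (abs_one_sub_two_div_le hc0 (by linarith) hc2 (ho.h_le_four ht0 ht n)) (abs_nonneg _)

lemma mul_pow_le_abs (ho : IsOrbit y h) (ht0 : 0 < y 0) (ht : y 0 ≤ 1 / 10) {c : ℝ} {M : ℕ}
    (hc : 2 * c ≤ 1) (hM : ∀ k < M, h k ≤ 1 + c) :
    ∀ k ≤ M, y 0 * (1 - 2 * c) ^ k ≤ |y k| := by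
  intro k
  induction k with
  | zero => intro _; simp [abs_of_pos ht0]
  | succ k ih =>
    intro hk
    have hρ : 1 - 2 * c ≤ |1 - 2 / h k| := by
      have := le_abs_one_sub_two_div (by linarith [ho.one_le_h ht0 ht k] : 0 < h k)
      linarith [hM k hk]
    calc y 0 * (1 - 2 * c) ^ (k + 1) = (1 - 2 * c) * (y 0 * (1 - 2 * c) ^ k) := by ring
      _ ≤ |1 - 2 / h k| * |y k| :=
          mul_le_mul hρ (ih (by omega)) (mul_nonneg ht0.le (pow_nonneg (by linarith) k))
            (abs_nonneg _)
      _ = |y (k + 1)| := (ho.abs_y_succ k).symm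

lemma exists_h_ge (ho : IsOrbit y h) (ht0 : 0 < y 0) (ht : y 0 ≤ 1 / 10) :
    ∃ M : ℕ, M * y 0 ≤ 1 / 4 + y 0 ∧ 1 + 2 / 5 * y 0 ≤ h M := by
  set t := y 0
  set M := ⌈1 / (4 * t)⌉₊
  have hM1 : 1 / 4 ≤ M * t := by
    rw [← div_le_iff₀ ht0, div_div]; exact Nat.le_ceil _
  have hM2 : M * t ≤ 1 / 4 + t :=
    calc M * t ≤ (1 / (4 * t) + 1) * t := by
          gcongr; exact (Nat.ceil_lt_add_one (by positivity)).le
      _ = 1 / 4 + t := by field_simp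
  refine ⟨M, hM2, ?_⟩
  by_contra! hlt
  have hlow : ∀ k ≤ M, t * (1 - 4 / 5 * t) ^ k ≤ |y k| := by
    simpa only [show 2 * (2 / 5 * t) = 4 / 5 * t by ring] using
      ho.mul_pow_le_abs ht0 ht (c := 2 / 5 * t) (by linarith)
        fun k hk => (ho.monotone_h ht0 ht hk.le).trans hlt.le
  have hbase : 0 ≤ 1 - 4 / 5 * t := by linarith
  have hstep : ∀ k ∈ range M, 4 * t ^ 2 * (1 - 4 / 5 * t) ^ (2 * M) ≤ h (k + 1) - h k := by
    intro k hk
    have hk : k + 1 ≤ M := mem_range.mp hk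
    have hpow : (1 - 4 / 5 * t) ^ (2 * M) ≤ ((1 - 4 / 5 * t) ^ (k + 1)) ^ 2 := by
      rw [← pow_mul]; exact pow_le_pow_of_le_one hbase (by linarith) (by omega)
    have hsq : (t * (1 - 4 / 5 * t) ^ (k + 1)) ^ 2 ≤ y (k + 1) ^ 2 := by
      rw [← sq_abs (y (k + 1))]
      exact pow_le_pow_left₀ (by positivity) (hlow (k + 1) hk) 2
    nlinarith [ho.h_add_four_sq_le ht0 ht k]
  have hsum := sum_le_sum hstep
  rw [sum_const, card_range, nsmul_eq_mul, sum_range_sub (fun k => h k)] at hsum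
  have hbern : 1 - 8 / 5 * (M * t) ≤ (1 - 4 / 5 * t) ^ (2 * M) := by
    have := one_add_mul_le_pow (by linarith : (-2 : ℝ) ≤ -(4 / 5 * t)) (2 * M)
    rw [← sub_eq_add_neg] at this; push_cast at this; linarith
  have hquad : 1 / 10 ≤ M * t * (1 - 8 / 5 * (M * t)) := by
    nlinarith [mul_nonneg (sub_nonneg.mpr hM1) (sub_nonneg.mpr hM2)]
  have h0 : 1 ≤ h 0 := ho.one_le_h ht0 ht 0
  nlinarith [mul_le_mul_of_nonneg_left hbern (by positivity : (0 : ℝ) ≤ M * (4 * t ^ 2))]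

lemma sum_range_abs_le (ho : IsOrbit y h) (ht0 : 0 < y 0) (ht : y 0 ≤ 1 / 10) (N : ℕ) :
    ∑ j ∈ range N, |y j| ≤ 11 / 4 + y 0 := by
  obtain ⟨M, hMt, hM⟩ := ho.exists_h_ge ht0 ht
  have hhead : ∑ j ∈ range M, |y j| ≤ M * y 0 := by
    simpa using sum_le_sum fun j (_ : j ∈ range M) => ho.abs_le ht0 ht j
  have htail : ∑ k ∈ range N, |y (M + k)| ≤ 5 / 2 := by
    have := sum_range_le_div_of_le_one_sub_mul (a := fun k => |y (M + k)|)
      (by positivity : 0 < 2 / 5 * y 0) (fun _ => abs_nonneg _)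
      (fun k => ho.abs_y_succ_le ht0 ht (by positivity) (by linarith)
        (hM.trans (ho.monotone_h ht0 ht (Nat.le_add_right M k)))) N
    calc _ ≤ |y (M + 0)| / (2 / 5 * y 0) := this
      _ ≤ y 0 / (2 / 5 * y 0) := by gcongr; exact ho.abs_le ht0 ht _
      _ = 5 / 2 := by field_simp
  calc ∑ j ∈ range N, |y j| ≤ ∑ j ∈ range (M + N), |y j| :=
        sum_le_sum_of_subset_of_nonneg (range_mono (by omega)) fun _ _ _ => abs_nonneg _
    _ = ∑ j ∈ range M, |y j| + ∑ k ∈ range N, |y (M + k)| := sum_range_add _ M N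
    _ ≤ 11 / 4 + y 0 := by linarith

end IsOrbit

/-- for small y_0 the series Σ|y_j| converges and has sum less than 4. -/
theorem stmt_4 :
    ∃ δ > (0:ℝ), ∀ y h : ℕ → ℝ,
      y 0 ∈ Set.Ioo (0:ℝ) 1 → y 0 < δ →
      h 0 = 1 + 2 * (y 0)^2 / (1 - (y 0)^2) →
      (∀ i : ℕ, y (i+1) = (1 - 2 / h i) * y i) →
      (∀ i : ℕ, h (i+1) = h i + 4 * (y (i+1))^2 / (1 - (y (i+1))^2)) →
      Summable (fun j : ℕ => |y j|) ∧ (∑' j : ℕ, |y j|) < 4 := by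
  refine ⟨1 / 10, by norm_num, fun y h hy0 hδ hh0 hy hh => ?_⟩
  have ho : IsOrbit y h := ⟨hh0, hy, hh⟩
  have hbound := ho.sum_range_abs_le hy0.1 hδ.le
  refine ⟨summable_of_sum_range_le (fun _ => abs_nonneg _) hbound, ?_⟩
  linarith [Real.tsum_le_of_sum_range_le (fun _ => abs_nonneg _) hbound]
end

section
/- If y_0 ∈ (0, 1/√5) satisfies (1/8)(1 + 2y_0²/(1-y_0²))²(1-y_0²) < 1/5, and the sequences (y_i), (h_i) are defined by h_0 = 1 + 2y_0²/(1-y_0²), y_{i+1} = (1 - 2/h_i)y_i, h_{i+1} = h_i + 4y_{i+1}²/(1-y_{i+1}²), and moreover 1 < h_j < 2 for all j ≤ i, then y_0² + y_1² + ... + y_{i+1}² < 1/5. -/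
/-!
With `s = y₀²` and `ρ = (1 - 2/h₀)²`, every step multiplies `y²` by `(1 - 2/h_k)²`. While
`1 < h_k < 2` this factor is `< 1`, so `y_k² ≤ s < 1`, hence `h` is nondecreasing, so
`1 - 2/h_k ∈ [1 - 2/h₀, 0)` and the factor is at most `ρ`. Thus `y_k² ≤ ρᵏ s` and the partial
sums are below `s / (1 - ρ)`, which for `h₀ = (1 + s)/(1 - s)` is exactly `h₀² (1 - s) / 8`.
-/

open Finset

theorem one_sub_two_div_sq_lt_one {a : ℝ} (ha : 1 < a) : (1 - 2 / a) ^ 2 < 1 := by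
  have h1 : 2 / a < 2 := by rw [div_lt_iff₀ (by linarith)]; linarith
  have h2 : 0 < 2 / a := by positivity
  nlinarith

theorem one_sub_two_div_sq_le_s5 {a b : ℝ} (ha : 0 < a) (hab : a ≤ b) (hb : b < 2) :
    (1 - 2 / b) ^ 2 ≤ (1 - 2 / a) ^ 2 := by
  have h1 : 2 / b ≤ 2 / a := div_le_div_of_nonneg_left zero_le_two ha hab
  have h2 : 1 < 2 / b := by rw [lt_div_iff₀ (ha.trans_le hab)]; linarith
  nlinarith

theorem lt_one_of_one_lt_one_add_two_mul_div {s : ℝ} (h : 1 < 1 + 2 * s / (1 - s)) : s < 1 := by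
  by_contra! hs1
  have : 2 * s / (1 - s) ≤ 0 := div_nonpos_of_nonneg_of_nonpos (by linarith) (by linarith)
  linarith

/-- `s / (1 - ρ)` in closed form, written as a product to avoid dividing by `1 - ρ`. -/
theorem eq_one_sub_sq_mul {s : ℝ} (hs : 0 ≤ s) (hs1 : s < 1) :
    s = (1 - (1 - 2 / (1 + 2 * s / (1 - s))) ^ 2) *
      ((1 / 8) * (1 + 2 * s / (1 - s)) ^ 2 * (1 - s)) := by
  have h1s : 1 - s ≠ 0 := by linarith
  have h0 : 1 + 2 * s / (1 - s) = (1 + s) / (1 - s) := by field_simp; ring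
  rw [h0]
  have : 1 + s ≠ 0 := by linarith
  field_simp
  ring

section Recursion

variable {y h : ℕ → ℝ} {i : ℕ}

theorem sq_succ_eq (hyrec : ∀ k, y (k + 1) = (1 - 2 / h k) * y k) (k : ℕ) :
    y (k + 1) ^ 2 = (1 - 2 / h k) ^ 2 * y k ^ 2 := by
  rw [hyrec, mul_pow]

theorem sq_le_sq_zero (hyrec : ∀ k, y (k + 1) = (1 - 2 / h k) * y k)
    (hh : ∀ j ≤ i, 1 < h j) {k : ℕ} (hk : k ≤ i + 1) : y k ^ 2 ≤ y 0 ^ 2 := by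
  have := le_geom (u := fun k ↦ y k ^ 2) zero_le_one k fun j hj ↦ by
    rw [sq_succ_eq hyrec]
    exact mul_le_mul_of_nonneg_right (one_sub_two_div_sq_lt_one (hh j (by omega))).le
      (sq_nonneg _)
  simpa using this

theorem h_zero_le_of_sq_lt_one
    (hhrec : ∀ k, h (k + 1) = h k + 4 * y (k + 1) ^ 2 / (1 - y (k + 1) ^ 2))
    (hy : ∀ k ≤ i + 1, y k ^ 2 < 1) {k : ℕ} (hk : k ≤ i + 1) : h 0 ≤ h k := by
  induction k with
  | zero => exact le_rfl
  | succ k ih =>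
    have hstep : 0 ≤ 4 * y (k + 1) ^ 2 / (1 - y (k + 1) ^ 2) :=
      div_nonneg (by positivity) (by linarith [hy (k + 1) hk])
    rw [hhrec]
    linarith [ih (by omega)]

theorem sq_le_geom (hyrec : ∀ k, y (k + 1) = (1 - 2 / h k) * y k) (h0 : 0 < h 0)
    (hmono : ∀ j ≤ i, h 0 ≤ h j) (hlt : ∀ j ≤ i, h j < 2) {k : ℕ} (hk : k ≤ i + 1) :
    y k ^ 2 ≤ ((1 - 2 / h 0) ^ 2) ^ k * y 0 ^ 2 :=
  le_geom (u := fun k ↦ y k ^ 2) (sq_nonneg _) k fun j hj ↦ by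
    rw [sq_succ_eq hyrec]
    exact mul_le_mul_of_nonneg_right
      (one_sub_two_div_sq_le_s5 h0 (hmono j (by omega)) (hlt j (by omega))) (sq_nonneg _)

end Recursion

theorem stmt_5_general (y h : ℕ → ℝ) (i : ℕ)
    (hy0cond : (1/8) * (1 + 2 * (y 0)^2 / (1 - (y 0)^2))^2 * (1 - (y 0)^2) < 1/5)
    (hh0 : h 0 = 1 + 2 * (y 0)^2 / (1 - (y 0)^2))
    (hyrec : ∀ k : ℕ, y (k+1) = (1 - 2 / h k) * y k)
    (hhrec : ∀ k : ℕ, h (k+1) = h k + 4 * (y (k+1))^2 / (1 - (y (k+1))^2))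
    (hhbound : ∀ j ≤ i, 1 < h j ∧ h j < 2) :
    ∑ j ∈ Finset.range (i+2), (y j)^2 < 1/5 := by
  have hs1 : y 0 ^ 2 < 1 :=
    lt_one_of_one_lt_one_add_two_mul_div (hh0 ▸ (hhbound 0 (Nat.zero_le _)).1)
  have hy : ∀ k ≤ i + 1, y k ^ 2 < 1 := fun k hk ↦
    (sq_le_sq_zero hyrec (fun j hj ↦ (hhbound j hj).1) hk).trans_lt hs1
  have hgeom : ∀ k ≤ i + 1, y k ^ 2 ≤ ((1 - 2 / h 0) ^ 2) ^ k * y 0 ^ 2 := fun k ↦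
    sq_le_geom hyrec (by linarith [hhbound 0 (Nat.zero_le _)])
      (fun j hj ↦ h_zero_le_of_sq_lt_one hhrec hy (by omega)) (fun j hj ↦ (hhbound j hj).2)
  have hρ : (1 - 2 / h 0) ^ 2 < 1 := one_sub_two_div_sq_lt_one (hhbound 0 (Nat.zero_le _)).1
  calc ∑ j ∈ range (i + 2), y j ^ 2
      ≤ ∑ j ∈ range (i + 2), ((1 - 2 / h 0) ^ 2) ^ j * y 0 ^ 2 :=
        sum_le_sum fun j hj ↦ hgeom j (by simp at hj; omega)
    _ = (∑ j ∈ Ico 0 (i + 2), ((1 - 2 / h 0) ^ 2) ^ j) * y 0 ^ 2 := by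
        rw [← sum_mul, range_eq_Ico]
    _ ≤ 1 / (1 - (1 - 2 / h 0) ^ 2) * y 0 ^ 2 := by
        gcongr
        simpa using geom_sum_Ico_le_of_lt_one (m := 0) (sq_nonneg _) hρ
    _ = (1/8) * (1 + 2 * (y 0)^2 / (1 - (y 0)^2))^2 * (1 - (y 0)^2) := by
        rw [one_div_mul_eq_div, div_eq_iff (sub_ne_zero.2 hρ.ne'), mul_comm, hh0]
        exact eq_one_sub_sq_mul (sq_nonneg _) hs1
    _ < 1 / 5 := hy0cond

/-- bound on partial sums of squares y_0²+...+y_{i+1}² < 1/5. -/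
theorem stmt_5 (y h : ℕ → ℝ) (i : ℕ)
    (hy0pos : 0 < y 0) (hy0lt : y 0 < 1 / Real.sqrt 5)
    (hy0cond : (1/8) * (1 + 2 * (y 0)^2 / (1 - (y 0)^2))^2 * (1 - (y 0)^2) < 1/5)
    (hh0 : h 0 = 1 + 2 * (y 0)^2 / (1 - (y 0)^2))
    (hyrec : ∀ k : ℕ, y (k+1) = (1 - 2 / h k) * y k)
    (hhrec : ∀ k : ℕ, h (k+1) = h k + 4 * (y (k+1))^2 / (1 - (y (k+1))^2))
    (hhbound : ∀ j ≤ i, 1 < h j ∧ h j < 2) :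
    ∑ j ∈ Finset.range (i+2), (y j)^2 < 1/5 :=
  stmt_5_general y h i hy0cond hh0 hyrec hhrec hhbound
end

section
/- Let T and T' be triangles in ℝ² such that T is not congruent to T' under the group generated by translations and point reflections (i.e., there are no s ∈ {±1} and t ∈ ℝ² with T' = sT + t). Then the set of real numbers μ for which the sheared triangles A_μ T and A_μ T' are congruent under Euclidean isometries (including reflections), where A_μ = [[1, μ],[0, 1]], is finite. -/
/-- The shear map A_μ = [[1, μ],[0, 1]] on the Euclidean plane. -/
def shear (μ : ℝ) (p : EuclideanSpace ℝ (Fin 2)) : EuclideanSpace ℝ (Fin 2) :=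
  WithLp.toLp 2 ![p 0 + μ * p 1, p 1]

/-- Congruence of subsets of the plane under Euclidean isometries (including reflections). -/
def EuclCongruent (A B : Set (EuclideanSpace ℝ (Fin 2))) : Prop :=
  ∃ f : EuclideanSpace ℝ (Fin 2) ≃ᵢ EuclideanSpace ℝ (Fin 2), f '' A = B

/-
For each shear parameter μ at which the sheared triangles are congruent, the isometry maps the
vertices of one onto the vertices of the other (they are the extreme points), so some permutation
σ of the vertices satisfies ‖A_μ (v'_{σ i} - v'_{σ j})‖ = ‖A_μ (v_i - v_j)‖ for all i, j.
Squared, each of these is a quadratic equation in μ; if one σ serves infinitely many μ, all its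
coefficients vanish, which forces v'_{σ i} - v'_{σ j} = ±(v_i - v_j). Affine independence of the
v_i makes the three signs equal, so T' = ±T + t.
-/

open Set Polynomial

theorem eq_zero_of_infinite_setOf_quadratic_eq_zero {R : Type*} [CommRing R] [IsDomain R]
    {a b c : R} (h : {x : R | a * x ^ 2 + b * x + c = 0}.Infinite) :
    a = 0 ∧ b = 0 ∧ c = 0 := by
  have hp : C a * X ^ 2 + C b * X + C c = 0 :=
    eq_zero_of_infinite_isRoot _ (by simpa using h)
  refine ⟨?_, ?_, ?_⟩
  · simpa using congrArg (coeff · 2) hp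
  · simpa using congrArg (coeff · 1) hp
  · simpa using congrArg (coeff · 0) hp

theorem eq_and_eq_or_eq_neg_and_eq_neg_of_sq_eq {R : Type*} [CommRing R] [IsDomain R]
    [CharZero R] {x y x' y' : R} (hx : x ^ 2 = x' ^ 2) (hy : y ^ 2 = y' ^ 2)
    (hxy : x * y = x' * y') :
    (x = x' ∧ y = y') ∨ (x = -x' ∧ y = -y') := by
  have hmixed : ∀ {a b : R}, a * -b = a * b → a = 0 ∨ b = 0 := fun h =>
    mul_eq_zero.1 ((mul_eq_zero.1 (by linear_combination -h : (2 : R) * _ = 0)).resolve_left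
      two_ne_zero)
  rcases sq_eq_sq_iff_eq_or_eq_neg.1 hx with hx | hx <;>
    rcases sq_eq_sq_iff_eq_or_eq_neg.1 hy with hy | hy <;> subst hx hy
  · exact .inl ⟨rfl, rfl⟩
  · rcases hmixed hxy with rfl | rfl <;> simp
  · rcases hmixed (a := x') (b := y) (by linear_combination hxy) with rfl | rfl <;> simp
  · exact .inr ⟨rfl, rfl⟩

namespace AffineBasis

variable {ι 𝕜 E : Type*} [Fintype ι] [Field 𝕜] [LinearOrder 𝕜] [IsStrictOrderedRing 𝕜]
  [AddCommGroup E] [Module 𝕜 E]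

theorem coord_le_one_of_mem_convexHull (b : AffineBasis ι 𝕜 E) {x : E}
    (hx : x ∈ convexHull 𝕜 (range b)) (i : ι) : b.coord i x ≤ 1 := by
  rw [b.convexHull_eq_nonneg_coord] at hx
  calc b.coord i x ≤ ∑ j, b.coord j x :=
        Finset.single_le_sum (fun j _ => hx j) (Finset.mem_univ i)
    _ = 1 := b.sum_coord_apply_eq_one x

theorem mem_extremePoints_convexHull (b : AffineBasis ι 𝕜 E) (i : ι) :
    b i ∈ (convexHull 𝕜 (range b)).extremePoints 𝕜 := by
  classical
  have hull := b.convexHull_eq_nonneg_coord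
  suffices key : ∀ y ∈ convexHull 𝕜 (range b), ∀ z ∈ convexHull 𝕜 (range b),
      b i ∈ openSegment 𝕜 y z → y = b i from
    mem_extremePoints.2 ⟨subset_convexHull 𝕜 _ (mem_range_self i), fun y hy z hz hyz =>
      ⟨key y hy z hz hyz, key z hz y hy (openSegment_symm 𝕜 y z ▸ hyz)⟩⟩
  rintro y hy z hz ⟨s, t, hs, ht, hst, hyz⟩
  refine b.ext_elem fun j => ?_
  have hcomb : s * b.coord j y + t * b.coord j z = b.coord j (b i) := by
    rw [← hyz, Convex.combo_affine_apply hst, smul_eq_mul, smul_eq_mul]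
  have hy0 := (hull ▸ hy : y ∈ {x | ∀ i, 0 ≤ b.coord i x}) j
  have hz0 := (hull ▸ hz : z ∈ {x | ∀ i, 0 ≤ b.coord i x}) j
  have hy1 := b.coord_le_one_of_mem_convexHull hy j
  have hz1 := b.coord_le_one_of_mem_convexHull hz j
  rw [b.coord_apply] at hcomb ⊢
  split_ifs at hcomb ⊢ <;> nlinarith

theorem extremePoints_convexHull_eq (b : AffineBasis ι 𝕜 E) :
    (convexHull 𝕜 (range b)).extremePoints 𝕜 = range b :=
  extremePoints_convexHull_subset.antisymm <| range_subset_iff.2 b.mem_extremePoints_convexHull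

theorem exists_perm_of_convexHull_eq (b b' : AffineBasis ι 𝕜 E)
    (h : convexHull 𝕜 (range b) = convexHull 𝕜 (range b')) :
    ∃ σ : Equiv.Perm ι, ∀ i, b' (σ i) = b i := by
  have hrange : range b = range b' := by
    rw [← b.extremePoints_convexHull_eq, h, b'.extremePoints_convexHull_eq]
  refine ⟨(Equiv.ofInjective b b.ind.injective).trans
    ((Equiv.setCongr hrange).trans (Equiv.ofInjective b' b'.ind.injective).symm), fun i => ?_⟩
  simp [Equiv.apply_ofInjective_symm]

end AffineBasis

theorem AffineIndependent.exists_perm_of_convexHull_eq {ι 𝕜 E : Type*} [Fintype ι] [Field 𝕜]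
    [LinearOrder 𝕜] [IsStrictOrderedRing 𝕜] [AddCommGroup E] [Module 𝕜 E] [FiniteDimensional 𝕜 E]
    {u w : ι → E} (hu : AffineIndependent 𝕜 u) (hw : AffineIndependent 𝕜 w)
    (hcard : Fintype.card ι = Module.finrank 𝕜 E + 1)
    (h : convexHull 𝕜 (range u) = convexHull 𝕜 (range w)) :
    ∃ σ : Equiv.Perm ι, ∀ i, w (σ i) = u i :=
  AffineBasis.exists_perm_of_convexHull_eq
    ⟨u, hu, hu.affineSpan_eq_top_iff_card_eq_finrank_add_one.2 hcard⟩
    ⟨w, hw, hw.affineSpan_eq_top_iff_card_eq_finrank_add_one.2 hcard⟩ h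

theorem AffineIndependent.exists_perm_dist_eq_of_isometryEquiv_image_convexHull {ι E : Type*}
    [Fintype ι] [NormedAddCommGroup E] [NormedSpace ℝ E] [FiniteDimensional ℝ E]
    {u w : ι → E} (hu : AffineIndependent ℝ u) (hw : AffineIndependent ℝ w)
    (hcard : Fintype.card ι = Module.finrank ℝ E + 1) (f : E ≃ᵢ E)
    (h : f '' convexHull ℝ (range u) = convexHull ℝ (range w)) :
    ∃ σ : Equiv.Perm ι, ∀ i j, dist (w (σ i)) (w (σ j)) = dist (u i) (u j) := by
  let F := f.toRealAffineIsometryEquiv.toAffineEquiv.toAffineMap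
  have hF : ⇑F = f := rfl
  have himage : f '' convexHull ℝ (range u) = convexHull ℝ (range (f ∘ u)) := by
    rw [← hF, F.image_convexHull, range_comp]
  obtain ⟨σ, hσ⟩ := (hu.map' F f.injective).exists_perm_of_convexHull_eq hw hcard (himage ▸ h)
  exact ⟨σ, fun i j => by rw [hσ, hσ, Function.comp_apply, Function.comp_apply, hF, f.dist_eq]⟩

theorem AffineIndependent.exists_eq_smul_add_of_sub_eq_or_eq_neg {k V : Type*} [CommRing k]
    [AddCommGroup V] [Module k V] {v w : Fin 3 → V} (hv : AffineIndependent k v)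
    (h : ∀ i j, w i - w j = v i - v j ∨ w i - w j = -(v i - v j)) :
    ∃ s : k, (s = 1 ∨ s = -1) ∧ ∃ t, ∀ i, w i = s • v i + t := by
  have hsign : ∀ i j, ∃ e : k, (e = 1 ∨ e = -1) ∧ w i - w j = e • (v i - v j) := fun i j =>
    (h i j).elim (fun h => ⟨1, .inl rfl, by rw [h, one_smul]⟩)
      (fun h => ⟨-1, .inr rfl, by rw [h, neg_one_smul]⟩)
  choose e he hew using hsign
  -- The three edges close up: (w 2 - w 0) - (w 1 - w 0) - (w 2 - w 1) = 0.
  have hzero := hv.eq_zero_of_sum_eq_zero (s := Finset.univ)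
    (w := ![e 1 0 - e 2 0, e 2 1 - e 1 0, e 2 0 - e 2 1]) (by simp [Fin.sum_univ_three])
    (by
      simp only [Fin.sum_univ_three, Matrix.cons_val_zero, Matrix.cons_val_one,
        Matrix.cons_val_two, Matrix.head_cons, Matrix.tail_cons]
      linear_combination (norm := module) hew 1 0 + hew 2 1 - hew 2 0)
  have h10 : e 1 0 = e 2 0 := sub_eq_zero.1 (by simpa using hzero 0 (Finset.mem_univ _))
  refine ⟨e 1 0, he 1 0, w 0 - e 1 0 • v 0, fun i => ?_⟩
  fin_cases i <;> dsimp
  · simp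
  · linear_combination (norm := module) hew 1 0
  · rw [h10]
    linear_combination (norm := module) hew 2 0

theorem image_convexHull_smul_add {𝕜 E : Type*} [Field 𝕜] [LinearOrder 𝕜] [IsStrictOrderedRing 𝕜]
    [AddCommGroup E] [Module 𝕜 E] (s : 𝕜) (t : E) (A : Set E) :
    (fun p => s • p + t) '' convexHull 𝕜 A = convexHull 𝕜 ((fun p => s • p + t) '' A) :=
  ((LinearMap.lsmul 𝕜 E s).toAffineMap + AffineMap.const 𝕜 E t).image_convexHull A

local notation "ℝ²" => EuclideanSpace ℝ (Fin 2)

@[simp] theorem shear_apply_zero (μ : ℝ) (p : ℝ²) : shear μ p 0 = p 0 + μ * p 1 := rfl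

@[simp] theorem shear_apply_one (μ : ℝ) (p : ℝ²) : shear μ p 1 = p 1 := rfl

noncomputable def shearEquiv (μ : ℝ) : ℝ² ≃ₗ[ℝ] ℝ² where
  toFun := shear μ
  invFun := shear (-μ)
  map_add' p q := by ext i; fin_cases i <;> simp [add_add_add_comm, mul_add]
  map_smul' c p := by ext i; fin_cases i <;> simp [mul_add, mul_left_comm]
  left_inv p := by ext i; fin_cases i <;> simp
  right_inv p := by ext i; fin_cases i <;> simp

theorem norm_shear_sq (μ : ℝ) (p : ℝ²) : ‖shear μ p‖ ^ 2 = (p 0 + μ * p 1) ^ 2 + p 1 ^ 2 := by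
  simp [EuclideanSpace.norm_sq_eq, Fin.sum_univ_two]

theorem eq_or_eq_neg_of_infinite_setOf_norm_shear_eq {p q : ℝ²}
    (h : {μ : ℝ | ‖shear μ p‖ = ‖shear μ q‖}.Infinite) : p = q ∨ p = -q := by
  have hquad : {μ : ℝ | (p 1 ^ 2 - q 1 ^ 2) * μ ^ 2 + 2 * (p 0 * p 1 - q 0 * q 1) * μ
      + (p 0 ^ 2 + p 1 ^ 2 - q 0 ^ 2 - q 1 ^ 2) = 0}.Infinite := by
    refine h.mono fun μ (hμ : ‖shear μ p‖ = ‖shear μ q‖) => ?_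
    have := congrArg (· ^ 2) hμ
    simp only [norm_shear_sq] at this
    show _ = _
    linear_combination this
  obtain ⟨h2, h1, h0⟩ := eq_zero_of_infinite_setOf_quadratic_eq_zero hquad
  rcases eq_and_eq_or_eq_neg_and_eq_neg_of_sq_eq (x := p 0) (y := p 1) (x' := q 0) (y' := q 1)
    (by linear_combination h0 - h2) (by linear_combination h2) (by linear_combination h1 / 2)
    with ⟨e0, e1⟩ | ⟨e0, e1⟩
  · left; ext i; fin_cases i <;> simpa
  · right; ext i; fin_cases i <;> simpa

theorem exists_perm_norm_shear_sub_eq_of_euclCongruent {v v' : Fin 3 → ℝ²}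
    (hv : AffineIndependent ℝ v) (hv' : AffineIndependent ℝ v') {μ : ℝ}
    (h : EuclCongruent (shear μ '' convexHull ℝ (range v)) (shear μ '' convexHull ℝ (range v'))) :
    ∃ σ : Equiv.Perm (Fin 3), ∀ i j, ‖shear μ (v' (σ i) - v' (σ j))‖ = ‖shear μ (v i - v j)‖ := by
  obtain ⟨f, hf⟩ := h
  let A := (shearEquiv μ).toLinearMap
  have hA : ⇑A = shear μ := rfl
  have himage : ∀ u : Fin 3 → ℝ²,
      shear μ '' convexHull ℝ (range u) = convexHull ℝ (range (A ∘ u)) := fun u => by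
    rw [← hA, A.image_convexHull, range_comp]
  rw [himage, himage] at hf
  have hA_inj : Function.Injective A := (shearEquiv μ).injective
  obtain ⟨σ, hσ⟩ :=
    (hv.map' A.toAffineMap hA_inj).exists_perm_dist_eq_of_isometryEquiv_image_convexHull
      (hv'.map' A.toAffineMap hA_inj) (by simp) f hf
  refine ⟨σ, fun i j => ?_⟩
  have hdist := hσ i j
  simp only [Function.comp_apply, LinearMap.coe_toAffineMap, dist_eq_norm] at hdist
  rwa [← map_sub, ← map_sub] at hdist

/-- if two triangles are not related by a translation or a point reflection
(composition of -id with a translation), then the set of shear parameters μ for which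
the sheared triangles are congruent is finite. -/
theorem stmt_8 (v v' : Fin 3 → EuclideanSpace ℝ (Fin 2))
    (hv : AffineIndependent ℝ v) (hv' : AffineIndependent ℝ v')
    (T : Set (EuclideanSpace ℝ (Fin 2))) (T' : Set (EuclideanSpace ℝ (Fin 2)))
    (hT : T = convexHull ℝ (Set.range v)) (hT' : T' = convexHull ℝ (Set.range v'))
    (hne : ¬ ∃ (s : ℝ) (t : EuclideanSpace ℝ (Fin 2)),
      (s = 1 ∨ s = -1) ∧ T' = (fun p => s • p + t) '' T) :
    {μ : ℝ | EuclCongruent (shear μ '' T) (shear μ '' T')}.Finite := by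
  subst hT hT'
  let S (σ : Equiv.Perm (Fin 3)) :=
    {μ : ℝ | ∀ i j, ‖shear μ (v' (σ i) - v' (σ j))‖ = ‖shear μ (v i - v j)‖}
  refine (finite_iUnion fun σ => (?_ : (S σ).Finite)).subset fun μ hμ =>
    mem_iUnion.2 (exists_perm_norm_shear_sub_eq_of_euclCongruent hv hv' hμ)
  refine not_infinite.1 fun hinf => ?_
  have hedge : ∀ i j, v' (σ i) - v' (σ j) = v i - v j ∨ v' (σ i) - v' (σ j) = -(v i - v j) :=
    fun i j => eq_or_eq_neg_of_infinite_setOf_norm_shear_eq <|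
      hinf.mono fun μ (hμ : μ ∈ S σ) => hμ i j
  obtain ⟨s, hs, t, hvert⟩ := hv.exists_eq_smul_add_of_sub_eq_or_eq_neg hedge
  refine hne ⟨s, t, hs, ?_⟩
  rw [image_convexHull_smul_add, ← range_comp, ← EquivLike.range_comp v' σ]
  exact congrArg _ (congrArg range (funext hvert))
end

section
/- Let T and T' be triangles in ℝ². Then the set {μ ∈ ℝ : A_μ T is congruent to T'}, where A_μ = [[1, μ],[0, 1]] and congruence is under Euclidean isometries including reflections, is finite (in fact of cardinality at most six). -/
open Set

theorem AffineIndependent.convexIndependent {𝕜 E ι : Type*} [Field 𝕜] [LinearOrder 𝕜]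
    [IsStrictOrderedRing 𝕜] [AddCommGroup E] [Module 𝕜 E] {p : ι → E}
    (hp : AffineIndependent 𝕜 p) : ConvexIndependent 𝕜 p := fun s i hi =>
  (hp.mem_affineSpan_iff i s).1 (convexHull_subset_affineSpan _ hi)

section Vertices

variable {E ι : Type*} [NormedAddCommGroup E] [NormedSpace ℝ E] [Finite ι]

theorem AffineIndependent.extremePoints_convexHull {p : ι → E} (hp : AffineIndependent ℝ p) :
    (convexHull ℝ (range p)).extremePoints ℝ = range p := by
  refine extremePoints_convexHull_subset.antisymm ?_
  rintro _ ⟨i, rfl⟩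
  -- By Krein–Milman the extreme points `V` already span the hull, so convex independence puts
  -- every vertex in `V`.
  set V := (convexHull ℝ (range p)).extremePoints ℝ
  obtain ⟨s, hs⟩ : ∃ s : Set ι, p '' s = V :=
    ⟨p ⁻¹' V, image_preimage_eq_of_subset extremePoints_convexHull_subset⟩
  have hfin : (range p).Finite := finite_range p
  have hV : convexHull ℝ V = convexHull ℝ (range p) := by
    rw [← closure_convexHull_extremePoints (hfin.isCompact_convexHull ℝ) (convex_convexHull ℝ _),
      ((hfin.subset extremePoints_convexHull_subset).isClosed_convexHull ℝ).closure_eq]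
  have hi : p i ∈ convexHull ℝ (p '' s) := by
    rw [hs, hV]; exact subset_convexHull ℝ _ (mem_range_self i)
  rw [← hs]
  exact mem_image_of_mem p (hp.convexIndependent s i hi)

theorem AffineIndependent.range_eq_of_convexHull_eq {u w : ι → E} (hu : AffineIndependent ℝ u)
    (hw : AffineIndependent ℝ w) (h : convexHull ℝ (range u) = convexHull ℝ (range w)) :
    range u = range w := by
  rw [← hu.extremePoints_convexHull, h, hw.extremePoints_convexHull]

end Vertices

theorem Fintype.sum_sum_comp_eq_of_range_eq {ι α M : Type*} [Fintype ι] [AddCommMonoid M]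
    {u w : ι → α} (hu : Function.Injective u) (hw : Function.Injective w)
    (h : range u = range w) (F : α → α → M) :
    ∑ i, ∑ j, F (u i) (u j) = ∑ i, ∑ j, F (w i) (w j) := by
  let σ : ι ≃ ι :=
    (Equiv.ofInjective u hu).trans ((Equiv.setCongr h).trans (Equiv.ofInjective w hw).symm)
  have hσ : ∀ i, w (σ i) = u i := fun i => Equiv.apply_ofInjective_symm hw _
  simp_rw [← hσ]
  exact Fintype.sum_equiv σ _ _ fun i => Fintype.sum_equiv σ _ _ fun j => rfl

noncomputable def shearLinearEquiv (μ : ℝ) :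
    EuclideanSpace ℝ (Fin 2) ≃ₗ[ℝ] EuclideanSpace ℝ (Fin 2) where
  toFun := shear μ
  invFun := shear (-μ)
  map_add' p q := by ext i; fin_cases i <;> simp [shear]; ring
  map_smul' c p := by ext i; fin_cases i <;> simp [shear]; ring
  left_inv p := by ext i; fin_cases i <;> simp [shear]
  right_inv p := by ext i; fin_cases i <;> simp [shear]

@[simp]
theorem coe_shearLinearEquiv (μ : ℝ) : ⇑(shearLinearEquiv μ) = shear μ := rfl

theorem dist_shear_sq (μ : ℝ) (x y : EuclideanSpace ℝ (Fin 2)) :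
    dist (shear μ x) (shear μ y) ^ 2 =
      (x 1 - y 1) ^ 2 * μ ^ 2 + 2 * (x 0 - y 0) * (x 1 - y 1) * μ + dist x y ^ 2 := by
  rw [EuclideanSpace.dist_eq, EuclideanSpace.dist_eq, Real.sq_sqrt (by positivity),
    Real.sq_sqrt (by positivity)]
  simp [Fin.sum_univ_two, Real.dist_eq, sq_abs, shear]
  ring

theorem finite_setOf_quadratic_eq {a b c d : ℝ} (ha : a ≠ 0) :
    {x : ℝ | a * x ^ 2 + b * x + c = d}.Finite := by
  open Polynomial in
  have hp : C a * X ^ 2 + C b * X + C (c - d) ≠ 0 := fun h => ha (by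
    simpa using congrArg (coeff · 2) h)
  refine (finite_setOfPred_isRoot hp).subset fun x hx => ?_
  simp only [mem_ofPred_eq] at hx
  simp [← hx]

theorem exists_apply_one_ne_of_affineIndependent {v : Fin 3 → EuclideanSpace ℝ (Fin 2)}
    (hv : AffineIndependent ℝ v) : ∃ i j, v i 1 ≠ v j 1 := by
  by_contra! h
  rw [affineIndependent_iff_not_collinear] at hv
  refine hv ((collinear_iff_of_mem (mem_range_self 0)).2 ⟨EuclideanSpace.single 0 1, ?_⟩)
  rintro _ ⟨i, rfl⟩
  refine ⟨v i 0 - v 0 0, ?_⟩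
  ext t
  fin_cases t <;> simp [h i 0]

/-- for any two triangles T, T', the set of μ with A_μ T congruent to T'
is finite. -/
theorem stmt_9 (v v' : Fin 3 → EuclideanSpace ℝ (Fin 2))
    (hv : AffineIndependent ℝ v) (hv' : AffineIndependent ℝ v')
    (T : Set (EuclideanSpace ℝ (Fin 2))) (T' : Set (EuclideanSpace ℝ (Fin 2)))
    (hT : T = convexHull ℝ (Set.range v)) (hT' : T' = convexHull ℝ (Set.range v')) :
    {μ : ℝ | EuclCongruent (shear μ '' T) T'}.Finite := by
  obtain ⟨i₀, j₀, hij⟩ := exists_apply_one_ne_of_affineIndependent hv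
  have hlead : 0 < ∑ i, ∑ j, (v i 1 - v j 1) ^ 2 :=
    Finset.sum_pos' (fun i _ => Finset.sum_nonneg fun j _ => sq_nonneg _)
      ⟨i₀, Finset.mem_univ _, Finset.sum_pos' (fun j _ => sq_nonneg _)
        ⟨j₀, Finset.mem_univ _, sq_pos_of_ne_zero (sub_ne_zero.2 hij)⟩⟩
  refine (finite_setOf_quadratic_eq hlead.ne'
    (b := ∑ i, ∑ j, 2 * (v i 0 - v j 0) * (v i 1 - v j 1))
    (c := ∑ i, ∑ j, dist (v i) (v j) ^ 2) (d := ∑ i, ∑ j, dist (v' i) (v' j) ^ 2)).subset ?_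
  rintro μ ⟨f, hf⟩
  set g := (shearLinearEquiv μ).toAffineEquiv.trans f.toRealAffineIsometryEquiv.toAffineEquiv
  have hg : ⇑g = f ∘ shear μ := by
    ext1 x; simp [g]
  have hgv : AffineIndependent ℝ (g ∘ v) := hv.map' g.toAffineMap g.injective
  have hrange : range (g ∘ v) = range v' := by
    refine hgv.range_eq_of_convexHull_eq hv' ?_
    rw [← hT', ← hf, hT, ← image_comp, ← hg, range_comp]
    exact (g.toAffineMap.image_convexHull _).symm
  calc
    _ = ∑ i, ∑ j, dist (shear μ (v i)) (shear μ (v j)) ^ 2 := by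
      simp only [dist_shear_sq, Finset.sum_add_distrib, Finset.sum_mul]
    _ = ∑ i, ∑ j, dist (g (v i)) (g (v j)) ^ 2 := by simp [hg, IsometryEquiv.dist_eq]
    _ = _ := Fintype.sum_sum_comp_eq_of_range_eq hgv.injective hv'.injective hrange
      (fun x y => dist x y ^ 2)
end

section
/- In the subdivision of the unit equilateral triangle with vertices (0,0), (1,0), (1/2,√3/2) by the centroid M = (1/2, √3/6), the quadrangle with vertices (0,0), (1-√3/3, 0), (1/2, √3/6), (√3/6, 1/2) has interior angles of sizes π/3, 7π/12, 2π/3 and 5π/12 at its four vertices in this order. -/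
open EuclideanGeometry

lemma arccos_aux (N a b ca cb c θ : ℝ) (ha : a = ca ^ 2) (hb : b = cb ^ 2)
    (hca : 0 ≤ ca) (hcb : 0 ≤ cb) (hD : ca * cb ≠ 0)
    (hN : N = c * (ca * cb)) (hc : Real.cos θ = c)
    (h0 : 0 ≤ θ) (hπ : θ ≤ Real.pi) :
    Real.arccos (N / (Real.sqrt a * Real.sqrt b)) = θ := by
  rw [ha, hb, Real.sqrt_sq hca, Real.sqrt_sq hcb, hN,
    mul_div_assoc, div_self hD, mul_one, ← hc, Real.arccos_cos h0 hπ]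

/-- the interior angles of the quadrangle with vertices
(0,0), (1-√3/3, 0), (1/2, √3/6), (√3/6, 1/2) are π/3, 7π/12, 2π/3 and 5π/12. -/
theorem stmt_14
    (P₁ P₂ P₃ P₄ : EuclideanSpace ℝ (Fin 2))
    (h1 : P₁ = !₂[0, 0]) (h2 : P₂ = !₂[1 - Real.sqrt 3 / 3, 0])
    (h3 : P₃ = !₂[1/2, Real.sqrt 3 / 6]) (h4 : P₄ = !₂[Real.sqrt 3 / 6, 1/2]) :
    ∠ P₄ P₁ P₂ = Real.pi / 3 ∧
    ∠ P₁ P₂ P₃ = 7 * Real.pi / 12 ∧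
    ∠ P₂ P₃ P₄ = 2 * Real.pi / 3 ∧
    ∠ P₃ P₄ P₁ = 5 * Real.pi / 12 := by
  subst h1 h2 h3 h4
  have s3 : Real.sqrt 3 ^ 2 = 3 := Real.sq_sqrt (by norm_num)
  have t2 : Real.sqrt 2 ^ 2 = 2 := Real.sq_sqrt (by norm_num)
  have s0 : (0:ℝ) ≤ Real.sqrt 3 := Real.sqrt_nonneg 3
  have t0 : (0:ℝ) ≤ Real.sqrt 2 := Real.sqrt_nonneg 2
  have s1 : (1:ℝ) < Real.sqrt 3 := by nlinarith
  have s2 : Real.sqrt 3 < 2 := by nlinarith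
  have t1 : (1:ℝ) < Real.sqrt 2 := by nlinarith
  have pi0 := Real.pi_pos
  refine ⟨?_, ?_, ?_, ?_⟩ <;>
  rw [EuclideanGeometry.angle, InnerProductGeometry.angle] <;>
  simp only [vsub_eq_sub, PiLp.inner_apply, EuclideanSpace.norm_eq, Fin.sum_univ_two,
      PiLp.sub_apply, Matrix.cons_val_zero, Matrix.cons_val_one, Matrix.head_cons,
      RCLike.inner_apply, conj_trivial, Real.norm_eq_abs, sq_abs, sub_zero, zero_sub,
      mul_zero, zero_mul, add_zero, zero_add]
  case refine_1 =>
    exact arccos_aux _ _ _ (Real.sqrt 3 / 3) (1 - Real.sqrt 3 / 3) (1/2) _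
      (by linear_combination (-1/12 : ℝ) * s3) (by ring)
      (by positivity) (by nlinarith) (ne_of_gt (mul_pos (by linarith) (by linarith)))
      (by ring) Real.cos_pi_div_three (by positivity) (by linarith)
  case refine_2 =>
    exact arccos_aux _ _ _ (1 - Real.sqrt 3 / 3) (Real.sqrt 2 * (3 - Real.sqrt 3) / 6)
      (1/2 * (Real.sqrt 2 / 2) - Real.sqrt 3 / 2 * (Real.sqrt 2 / 2)) _
      (by ring)
      (by linear_combination (1/12 : ℝ) * s3 - ((3 - Real.sqrt 3)^2/36) * t2)
      (by nlinarith) (by nlinarith) (ne_of_gt (mul_pos (by linarith) (div_pos (mul_pos (by linarith) (by linarith)) (by norm_num))))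
      (by linear_combination ((Real.sqrt 3 - 3)/36) * s3 - ((1 - Real.sqrt 3)*(3 - Real.sqrt 3)^2/72) * t2)
      (by rw [show (7 * Real.pi / 12 : ℝ) = Real.pi/3 + Real.pi/4 by ring, Real.cos_add,
            Real.cos_pi_div_three, Real.cos_pi_div_four, Real.sin_pi_div_three, Real.sin_pi_div_four])
      (by positivity) (by linarith)
  case refine_3 =>
    exact arccos_aux _ _ _ (Real.sqrt 2 * (3 - Real.sqrt 3) / 6) (Real.sqrt 2 * (3 - Real.sqrt 3) / 6)
      (-(1/2)) _
      (by linear_combination (1/12 : ℝ) * s3 - ((3 - Real.sqrt 3)^2/36) * t2)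
      (by linear_combination (-((3 - Real.sqrt 3)^2/36)) * t2)
      (by nlinarith) (by nlinarith) (ne_of_gt (mul_pos (div_pos (mul_pos (by linarith) (by linarith)) (by norm_num)) (div_pos (mul_pos (by linarith) (by linarith)) (by norm_num))))
      (by linear_combination ((3 - Real.sqrt 3)^2/72) * t2)
      (by rw [show (2 * Real.pi / 3 : ℝ) = Real.pi - Real.pi/3 by ring, Real.cos_pi_sub,
            Real.cos_pi_div_three])
      (by positivity) (by linarith)
  case refine_4 =>
    exact arccos_aux _ _ _ (Real.sqrt 2 * (3 - Real.sqrt 3) / 6) (Real.sqrt 3 / 3)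
      (Real.sqrt 3 / 2 * (Real.sqrt 2 / 2) - 1/2 * (Real.sqrt 2 / 2)) _
      (by linear_combination (-((3 - Real.sqrt 3)^2/36)) * t2)
      (by linear_combination (-1/12 : ℝ) * s3)
      (by nlinarith) (by positivity) (ne_of_gt (mul_pos (div_pos (mul_pos (by linarith) (by linarith)) (by norm_num)) (by positivity)))
      (by linear_combination ((Real.sqrt 3 - 3)/36) * s3 - (Real.sqrt 3 * (Real.sqrt 3 - 1)*(3 - Real.sqrt 3)/72) * t2)
      (by rw [show (5 * Real.pi / 12 : ℝ) = Real.pi/6 + Real.pi/4 by ring, Real.cos_add,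
            Real.cos_pi_div_six, Real.cos_pi_div_four, Real.sin_pi_div_six, Real.sin_pi_div_four])
      (by positivity) (by linarith)
end

section
/- For the tiling parameter y_0 = 1/√3, the recursion x_0 = 0, a_1 = 1/(1-y_0), b_1 = 1/(1+y_0), x_i = x_{i-1} + 2 - (a_i-b_i)y_{i-1}/(-4i+3+a_i+b_i), y_i = y_{i-1} - 2y_{i-1}/(-4i+3+a_i+b_i), a_{i+1} = a_i + 2/(1-y_i), b_{i+1} = b_i + 2/(1+y_i) yields, for all i ≥ 1: x_i = 2i - 1/2, y_i = 0, a_i = 2i + (√3-1)/2, and b_i = 2i - (√3+1)/2. -/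
/-- for y₀ = 1/√3 the recursion yields x_i = 2i - 1/2, y_i = 0,
a_i = 2i + (√3-1)/2, b_i = 2i - (√3+1)/2 for all i ≥ 1. -/
theorem stmt_16 (x y a b : ℕ → ℝ)
    (hy0 : y 0 = 1 / Real.sqrt 3) (hx0 : x 0 = 0)
    (ha1 : a 1 = 1 / (1 - y 0)) (hb1 : b 1 = 1 / (1 + y 0))
    (hden1 : ∀ i : ℕ, 1 - y i ≠ 0)
    (hden2 : ∀ i : ℕ, 1 + y i ≠ 0)
    (hden3 : ∀ i : ℕ, (-4 * ((i:ℝ) + 1) + 3 + a (i+1) + b (i+1)) ≠ 0)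
    (hx : ∀ i : ℕ, x (i+1) = x i + 2 -
      (a (i+1) - b (i+1)) * y i / (-4 * ((i:ℝ) + 1) + 3 + a (i+1) + b (i+1)))
    (hy : ∀ i : ℕ, y (i+1) = y i -
      2 * y i / (-4 * ((i:ℝ) + 1) + 3 + a (i+1) + b (i+1)))
    (ha : ∀ i : ℕ, a (i+2) = a (i+1) + 2 / (1 - y (i+1)))
    (hb : ∀ i : ℕ, b (i+2) = b (i+1) + 2 / (1 + y (i+1))) :
    ∀ i : ℕ,
      x (i+1) = 2 * ((i:ℝ) + 1) - 1/2 ∧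
      y (i+1) = 0 ∧
      a (i+1) = 2 * ((i:ℝ) + 1) + (Real.sqrt 3 - 1) / 2 ∧
      b (i+1) = 2 * ((i:ℝ) + 1) - (Real.sqrt 3 + 1) / 2 := by
  have h3 : Real.sqrt 3 ^ 2 = 3 := Real.sq_sqrt (by norm_num)
  have h3pos : (0:ℝ) < Real.sqrt 3 := Real.sqrt_pos.mpr (by norm_num)
  have h3ne : Real.sqrt 3 ≠ 0 := ne_of_gt h3pos
  have h10 := hden1 0
  have h20 := hden2 0
  rw [hy0] at h10 h20
  have ha1' : a 1 = 2 + (Real.sqrt 3 - 1) / 2 := by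
    rw [ha1, hy0]
    rw [div_eq_iff h10]
    field_simp
    nlinarith [h3]
  have hb1' : b 1 = 2 - (Real.sqrt 3 + 1) / 2 := by
    rw [hb1, hy0]
    rw [div_eq_iff h20]
    field_simp
    nlinarith [h3]
  intro i
  induction i with
  | zero =>
    have hden0 : (-4 * (((0:ℕ):ℝ) + 1) + 3 + a (0+1) + b (0+1)) = 2 := by
      push_cast
      rw [ha1', hb1']; ring
    have hy1 : y 1 = 0 := by
      have := hy 0
      rw [hden0] at this
      rw [this, hy0]; ring
    have hx1 : x 1 = 3/2 := by
      have := hx 0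
      rw [hden0] at this
      rw [this, hx0, hy0, ha1', hb1']
      field_simp
      nlinarith [h3]
    refine ⟨by rw [hx1]; norm_num, hy1, by rw [ha1']; norm_num, by rw [hb1']; norm_num⟩
  | succ n ih =>
    obtain ⟨ihx, ihy, iha, ihb⟩ := ih
    have hy2 : y (n+2) = 0 := by
      rw [hy (n+1), ihy]; ring
    have ha2 : a (n+2) = 2 * ((n:ℝ) + 2) + (Real.sqrt 3 - 1) / 2 := by
      rw [ha n, ihy, iha]; norm_num; ring
    have hb2 : b (n+2) = 2 * ((n:ℝ) + 2) - (Real.sqrt 3 + 1) / 2 := by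
      rw [hb n, ihy, ihb]; norm_num; ring
    have hx2 : x (n+2) = 2 * ((n:ℝ) + 2) - 1/2 := by
      rw [hx (n+1), ihy, ihx]; push_cast; ring
    refine ⟨by rw [hx2]; push_cast; ring, hy2,
      by rw [ha2]; push_cast; ring, by rw [hb2]; push_cast; ring⟩
end
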